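/- arXiv:1811.03441 — 4 statements merged into one kernel-verified Lean document; each statement's English description precedes it below -/
import Mathlib

section
/- Let A be a real symmetric n×n matrix with eigenvalues λ₁,…,λₙ, set H = tr A, and suppose H > 0 and there is ε > 0 with λᵢ ≥ εH for every i. Then H·tr(A³) − (tr(A²))² ≥ n·ε²·H²·(tr(A²) − H²/n). -/
open Matrix Finset

/-! In terms of the eigenvalues `λᵢ`, both sides are double sums over pairs: with `H = ∑ λᵢ`,
`2 (n ∑ λᵢ² - H²) = ∑ᵢⱼ (λᵢ - λⱼ)²` and `2 (H ∑ λᵢ³ - (∑ λᵢ²)²) = ∑ᵢⱼ λᵢ λⱼ (λᵢ - λⱼ)²`,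
both instances of the weighted identity `∑ᵢⱼ wᵢ wⱼ (xᵢ - xⱼ)² = 2 ((∑ w)(∑ w x²) - (∑ w x)²)`.
The pinching `λᵢ ≥ εH ≥ 0` gives `λᵢ λⱼ ≥ (εH)²` termwise. -/

theorem Matrix.IsHermitian.trace_pow_eq_sum_eigenvalues_pow {𝕜 ι : Type*} [RCLike 𝕜] [Fintype ι]
    [DecidableEq ι] {A : Matrix ι ι 𝕜} (hA : A.IsHermitian) (k : ℕ) :
    (A ^ k).trace = ∑ i, (hA.eigenvalues i : 𝕜) ^ k := by
  conv_lhs => rw [hA.spectral_theorem, ← map_pow, Unitary.conjStarAlgAut_apply, trace_mul_cycle,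
    Unitary.coe_star_mul_self, one_mul, diagonal_pow, trace_diagonal]
  simp

theorem Finset.sum_sum_mul_mul_sub_sq {ι R : Type*} [CommRing R] (s : Finset ι) (w x : ι → R) :
    ∑ i ∈ s, ∑ j ∈ s, w i * w j * (x i - x j) ^ 2 =
      2 * ((∑ i ∈ s, w i) * ∑ i ∈ s, w i * x i ^ 2 - (∑ i ∈ s, w i * x i) ^ 2) := by
  have h : ∀ i j, w i * w j * (x i - x j) ^ 2
      = w j * (w i * x i ^ 2) + w i * (w j * x j ^ 2) - 2 * ((w i * x i) * (w j * x j)) :=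
    fun i j => by ring
  simp only [h, sum_sub_distrib, sum_add_distrib, ← mul_sum, ← sum_mul]
  ring

theorem sq_mul_card_mul_sum_sq_sub_sq_le {ι : Type*} [Fintype ι] {l : ι → ℝ} {m : ℝ} (hm : 0 ≤ m)
    (hl : ∀ i, m ≤ l i) :
    m ^ 2 * (Fintype.card ι * ∑ i, l i ^ 2 - (∑ i, l i) ^ 2) ≤
      (∑ i, l i) * ∑ i, l i ^ 3 - (∑ i, l i ^ 2) ^ 2 := by
  have hvar := sum_sum_mul_mul_sub_sq univ (fun _ => (1 : ℝ)) l
  have hcov := sum_sum_mul_mul_sub_sq univ l l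
  simp only [one_mul, sum_const, card_univ, nsmul_eq_mul, mul_one] at hvar
  simp only [← pow_succ', ← sq] at hcov
  have hterm : ∀ i j, m ^ 2 * (l i - l j) ^ 2 ≤ l i * l j * (l i - l j) ^ 2 := fun i j =>
    mul_le_mul_of_nonneg_right (by rw [sq]; exact mul_le_mul (hl i) (hl j) hm (hm.trans (hl i)))
      (sq_nonneg _)
  have hsum := sum_le_sum fun i (_ : i ∈ univ) => sum_le_sum fun j (_ : j ∈ univ) => hterm i j
  simp only [← mul_sum, hvar, hcov] at hsum
  linear_combination hsum / 2

theorem stmt_2 {n : ℕ} (A : Matrix (Fin n) (Fin n) ℝ) (hA : A.IsHermitian)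
    (htr : 0 < A.trace) (ε : ℝ) (hε : 0 < ε)
    (heig : ∀ i, ε * A.trace ≤ hA.eigenvalues i) :
    (n : ℝ) * ε ^ 2 * A.trace ^ 2 * ((A ^ 2).trace - A.trace ^ 2 / n) ≤
      A.trace * (A ^ 3).trace - ((A ^ 2).trace) ^ 2 := by
  have htrace (k : ℕ) : (A ^ k).trace = ∑ i, hA.eigenvalues i ^ k := by
    simpa using hA.trace_pow_eq_sum_eigenvalues_pow k
  have hn : (n : ℝ) ≠ 0 := by
    rintro hn
    obtain rfl : n = 0 := by exact_mod_cast hn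
    simp at htr
  have hpinch := sq_mul_card_mul_sum_sq_sub_sq_le (mul_pos hε htr).le heig
  have htrace_one : A.trace = ∑ i, hA.eigenvalues i := by simpa using htrace 1
  rw [Fintype.card_fin, ← htrace 2, ← htrace 3, ← htrace_one] at hpinch
  calc (n : ℝ) * ε ^ 2 * A.trace ^ 2 * ((A ^ 2).trace - A.trace ^ 2 / n)
      = (ε * A.trace) ^ 2 * (n * (A ^ 2).trace - A.trace ^ 2) := by field_simp
    _ ≤ _ := hpinch
end

section
/- Let A be a positive semidefinite real symmetric n×n matrix whose smallest eigenvalue is λ₁, and set H = tr A. Then for every unit vector v one has H·⟨Av, v⟩ − ⟨A²v, v⟩ ≥ (n−1)·λ₁². -/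
open Matrix

theorem stmt_3 {n : ℕ} (A : Matrix (Fin n) (Fin n) ℝ) (hA : A.PosSemidef)
    (lam1 : ℝ) (hlam : IsLeast (Set.range hA.isHermitian.eigenvalues) lam1)
    (v : Fin n → ℝ) (hv : v ⬝ᵥ v = 1) :
    ((n : ℝ) - 1) * lam1 ^ 2 ≤
      A.trace * (A.mulVec v ⬝ᵥ v) - ((A ^ 2).mulVec v ⬝ᵥ v) := by
  classical
  set hH := hA.isHermitian with hHdef
  set U : Matrix (Fin n) (Fin n) ℝ :=
    (Matrix.IsHermitian.eigenvectorUnitary hH : Matrix (Fin n) (Fin n) ℝ) with hU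
  set μ := hH.eigenvalues with hμ
  have hstar : star U = Uᵀ := by
    ext i j; simp [Matrix.star_apply]
  have hUU : Uᵀ * U = 1 := by
    rw [← hstar]
    simpa [hU] using unitary.coe_star_mul_self (Matrix.IsHermitian.eigenvectorUnitary hH)
  have hUU' : U * Uᵀ = 1 := by
    rw [← hstar]
    simpa [hU] using unitary.coe_mul_star_self (Matrix.IsHermitian.eigenvectorUnitary hH)
  have hspec : A = U * diagonal μ * Uᵀ := by
    rw [← hstar]
    simpa using hH.spectral_theorem
  have hhelp : ∀ (M : Matrix (Fin n) (Fin n) ℝ) (x y : Fin n → ℝ),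
      (M *ᵥ x) ⬝ᵥ y = x ⬝ᵥ (Mᵀ *ᵥ y) := by
    intro M x y
    simp only [dotProduct, mulVec, Matrix.transpose_apply, Finset.sum_mul, Finset.mul_sum]
    rw [Finset.sum_comm]
    apply Finset.sum_congr rfl; intro i _
    apply Finset.sum_congr rfl; intro j _
    ring
  set w : Fin n → ℝ := Uᵀ *ᵥ v with hw
  have hw1 : ∑ i, w i ^ 2 = 1 := by
    have : w ⬝ᵥ w = 1 := by
      rw [hw, hhelp, transpose_transpose, mulVec_mulVec, hUU', one_mulVec, hv]
    simpa [dotProduct, pow_two] using this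
  have hdotD : ∀ d : Fin n → ℝ,
      (U * diagonal d * Uᵀ) *ᵥ v ⬝ᵥ v = ∑ i, d i * w i ^ 2 := by
    intro d
    have h1 : (U * diagonal d * Uᵀ) *ᵥ v = U *ᵥ (diagonal d *ᵥ w) := by
      rw [hw, ← mulVec_mulVec, ← mulVec_mulVec]
    rw [h1, hhelp, ← hw]
    simp only [dotProduct, mulVec_diagonal]
    apply Finset.sum_congr rfl; intro i _
    ring
  have hAv : A *ᵥ v ⬝ᵥ v = ∑ i, μ i * w i ^ 2 := by
    rw [hspec]; exact hdotD μ
  have hA2 : (A ^ 2) *ᵥ v ⬝ᵥ v = ∑ i, μ i ^ 2 * w i ^ 2 := by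
    have h2 : A ^ 2 = U * diagonal (fun i => μ i ^ 2) * Uᵀ := by
      rw [pow_two, hspec]
      have h3 : (U * diagonal μ * Uᵀ) * (U * diagonal μ * Uᵀ)
          = U * (diagonal μ * (Uᵀ * U) * diagonal μ) * Uᵀ := by
        simp only [Matrix.mul_assoc]
      rw [h3, hUU, Matrix.mul_one, diagonal_mul_diagonal]
      congr 1
      congr 1
      ext i
      ring
    rw [h2]; exact hdotD _
  have htr : A.trace = ∑ i, μ i := by
    rw [hspec, Matrix.trace_mul_cycle, hUU, Matrix.one_mul, trace_diagonal]
  have hmin : ∀ i, lam1 ≤ μ i := fun i => hlam.2 ⟨i, rfl⟩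
  obtain ⟨k, hk⟩ := hlam.1
  have h0 : 0 ≤ lam1 := hk ▸ hA.eigenvalues_nonneg k
  have hn : (1 : ℕ) ≤ n := Nat.one_le_iff_ne_zero.mpr (by rintro rfl; exact Fin.elim0 k)
  have hn1 : (0 : ℝ) ≤ (n : ℝ) - 1 := by
    have : (1 : ℝ) ≤ (n : ℝ) := by exact_mod_cast hn
    linarith
  have hw0 : ∀ i, (0 : ℝ) ≤ w i ^ 2 := fun i => sq_nonneg _
  rw [hAv, hA2, htr, Finset.mul_sum]
  have key : ∀ i : Fin n, ((n : ℝ) - 1) * lam1 ^ 2 * w i ^ 2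
      ≤ (∑ j, μ j) * (μ i * w i ^ 2) - μ i ^ 2 * w i ^ 2 := by
    intro i
    have hsum : ((n : ℝ) - 1) * lam1 ≤ ∑ j ∈ Finset.univ.erase i, μ j := by
      have hcard : (Finset.univ.erase i).card = n - 1 := by
        simp [Finset.card_erase_of_mem]
      have h4 := Finset.card_nsmul_le_sum (Finset.univ.erase i) μ lam1
        (fun j _ => hmin j)
      rw [hcard] at h4
      calc ((n : ℝ) - 1) * lam1 = ((n - 1 : ℕ) : ℝ) * lam1 := by
            rw [Nat.cast_sub hn]; push_cast; ring
        _ ≤ ∑ j ∈ Finset.univ.erase i, μ j := by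
            simpa [nsmul_eq_mul] using h4
    have hsplit : (∑ j, μ j) * (μ i * w i ^ 2) - μ i ^ 2 * w i ^ 2
        = (∑ j ∈ Finset.univ.erase i, μ j) * μ i * w i ^ 2 := by
      rw [← Finset.sum_erase_add _ _ (Finset.mem_univ i)]
      ring
    rw [hsplit]
    have h1 : ((n : ℝ) - 1) * lam1 ^ 2 ≤ (∑ j ∈ Finset.univ.erase i, μ j) * μ i := by
      have h5 : ((n : ℝ) - 1) * lam1 * lam1 ≤ (∑ j ∈ Finset.univ.erase i, μ j) * μ i := by
        apply mul_le_mul hsum (hmin i) h0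
        exact le_trans (mul_nonneg hn1 h0) hsum
      calc ((n : ℝ) - 1) * lam1 ^ 2 = ((n : ℝ) - 1) * lam1 * lam1 := by ring
        _ ≤ _ := h5
    exact mul_le_mul_of_nonneg_right h1 (hw0 i)
  calc ((n : ℝ) - 1) * lam1 ^ 2
      = ∑ i, ((n : ℝ) - 1) * lam1 ^ 2 * w i ^ 2 := by
        rw [← Finset.mul_sum, hw1, mul_one]
    _ ≤ ∑ i, ((∑ j, μ j) * (μ i * w i ^ 2) - μ i ^ 2 * w i ^ 2) :=
        Finset.sum_le_sum fun i _ => key i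
    _ = (∑ i, (∑ j, μ j) * (μ i * w i ^ 2)) - ∑ i, μ i ^ 2 * w i ^ 2 := by
        rw [Finset.sum_sub_distrib]
end

section
/- Let n > 0 and y₀ > 0 be reals and let f : [0,T) → ℝ be differentiable with f(0) ≥ y₀ and f'(t) ≥ f(t)³/n for all t ∈ [0,T). Then T ≤ n/(2y₀²). -/
/-!
As long as `f ≥ y₀ > 0` the inequality forces `f' > 0`, so `f` can never drop below `y₀`.
Then `f⁻² + 2t/n` is nonincreasing, because its derivative is `-2f'/f³ + 2/n ≤ 0`; hence
`2t/n < f(t)⁻² + 2t/n ≤ f(0)⁻² ≤ y₀⁻²` for every `t < T`.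
-/

open Set

theorem le_of_deriv_pos_at_level {f f' : ℝ → ℝ} {a b y : ℝ}
    (hf : ∀ x ∈ Icc a b, HasDerivAt f (f' x) x) (ha : y ≤ f a)
    (hlevel : ∀ x ∈ Ico a b, f x = y → 0 < f' x) : ∀ x ∈ Icc a b, y ≤ f x := by
  have hneg : ∀ x ∈ Icc a b, HasDerivAt (fun s => -f s) (-f' x) x := fun x hx => (hf x hx).neg
  intro x hx
  have hneg_le := image_le_of_deriv_right_lt_deriv_boundary' (f := fun s => -f s) (B := fun _ => -y)
    (B' := fun _ => 0)
    (fun s hs => (hneg s hs).continuousAt.continuousWithinAt)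
    (fun s hs => (hneg s (Ico_subset_Icc_self hs)).hasDerivWithinAt)
    (neg_le_neg ha) continuousOn_const (fun _ _ => hasDerivWithinAt_const _ _ _)
    (fun s hs hfs => neg_neg_of_pos (hlevel s hs (neg_inj.mp hfs))) hx
  exact neg_le_neg_iff.mp hneg_le

theorem antitoneOn_inv_sq_add_of_cube_div_le_deriv {f f' : ℝ → ℝ} {n : ℝ} {s : Set ℝ}
    (hs : Convex ℝ s) (hf : ∀ x ∈ s, HasDerivAt f (f' x) x) (hfpos : ∀ x ∈ s, 0 < f x)
    (hineq : ∀ x ∈ s, f x ^ 3 / n ≤ f' x) :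
    AntitoneOn (fun t => (f t ^ 2)⁻¹ + 2 * t / n) s := by
  have hderiv : ∀ x ∈ s, HasDerivAt (fun t => (f t ^ 2)⁻¹ + 2 * t / n)
      (-(2 * f x * f' x) / (f x ^ 2) ^ 2 + 2 / n) x := by
    intro x hx
    have hsq : HasDerivAt (fun t => f t ^ 2) (2 * f x * f' x) x :=
      ((hf x hx).pow 2).congr_deriv (by ring)
    exact (hsq.inv (pow_pos (hfpos x hx) 2).ne').add
      (by simpa using ((hasDerivAt_id x).const_mul 2).div_const n)
  refine antitoneOn_of_hasDerivWithinAt_nonpos hs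
    (fun x hx => (hderiv x hx).continuousAt.continuousWithinAt)
    (fun x hx => (hderiv x (interior_subset hx)).hasDerivWithinAt) fun x hx => ?_
  have hx := interior_subset hx
  have hfx := hfpos x hx
  have hcube : (f x ^ 3 / n) / f x ^ 3 = 1 / n := by field_simp
  have hrecip : 1 / n ≤ f' x / f x ^ 3 := by
    rw [← hcube]; exact div_le_div_of_nonneg_right (hineq x hx) (by positivity)
  have hrewrite : -(2 * f x * f' x) / (f x ^ 2) ^ 2 = -2 * (f' x / f x ^ 3) := by
    field_simp
  rw [hrewrite]
  linarith [show 2 / n = 2 * (1 / n) by ring]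

theorem stmt_9 (n y₀ T : ℝ) (hn : 0 < n) (hy : 0 < y₀)
    (f f' : ℝ → ℝ) (h0 : y₀ ≤ f 0)
    (hderiv : ∀ t ∈ Set.Ico (0 : ℝ) T, HasDerivAt f (f' t) t)
    (hineq : ∀ t ∈ Set.Ico (0 : ℝ) T, f t ^ 3 / n ≤ f' t) :
    T ≤ n / (2 * y₀ ^ 2) := by
  have hIcc : ∀ t ∈ Ico (0 : ℝ) T, Icc 0 t ⊆ Ico 0 T := fun t ht =>
    Icc_subset_Ico_right ht.2
  have hlower : ∀ t ∈ Ico (0 : ℝ) T, y₀ ≤ f t := fun t ht =>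
    le_of_deriv_pos_at_level (fun x hx => hderiv x (hIcc t ht hx)) h0
      (fun x hx hfx => (hfx ▸ (by positivity : 0 < y₀ ^ 3 / n)).trans_le
        (hineq x (hIcc t ht (Ico_subset_Icc_self hx)))) t ⟨ht.1, le_rfl⟩
  have hbefore : ∀ t ∈ Ico (0 : ℝ) T, 2 * t / n < (y₀ ^ 2)⁻¹ := by
    intro t ht
    have hanti := antitoneOn_inv_sq_add_of_cube_div_le_deriv (convex_Icc 0 t)
      (fun x hx => hderiv x (hIcc t ht hx))
      (fun x hx => hy.trans_le (hlower x (hIcc t ht hx)))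
      (fun x hx => hineq x (hIcc t ht hx))
      (left_mem_Icc.mpr ht.1) (right_mem_Icc.mpr ht.1) ht.1
    have hft : 0 < (f t ^ 2)⁻¹ := by have := hy.trans_le (hlower t ht); positivity
    have hf0 : (f 0 ^ 2)⁻¹ ≤ (y₀ ^ 2)⁻¹ := inv_anti₀ (by positivity) (by gcongr)
    simp only [mul_zero, zero_div, add_zero] at hanti
    linarith
  by_contra! hT
  have hblowup : 2 * (n / (2 * y₀ ^ 2)) / n = (y₀ ^ 2)⁻¹ := by field_simp
  exact (hblowup ▸ hbefore _ ⟨by positivity, hT⟩).false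
end

section
/- Let n be a positive real, T > 0, and let f : [0,T) → ℝ be differentiable with f(0) = y₀ > 0 and f'(t) ≥ f(t)³/n for all t. Then for all t ∈ [0,T), f(t) ≥ y₀/√(1 − (2/n)·y₀²·t) (in particular 1 − (2/n)y₀²t > 0 on [0,T)). -/
lemma stmt_18_pos (n T y₀ : ℝ) (hn : 0 < n) (hy : 0 < y₀)
    (f f' : ℝ → ℝ) (hf0 : f 0 = y₀)
    (hderiv : ∀ t ∈ Set.Ico (0 : ℝ) T, HasDerivAt f (f' t) t)
    (hineq : ∀ t ∈ Set.Ico (0 : ℝ) T, f t ^ 3 / n ≤ f' t) :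
    ∀ t ∈ Set.Ico (0 : ℝ) T, y₀ / 2 < f t := by
  by_contra hcon
  push_neg at hcon
  obtain ⟨t, htmem, htle⟩ := hcon
  set S : Set ℝ := {s | s ∈ Set.Ico (0 : ℝ) T ∧ f s ≤ y₀ / 2} with hS
  have hSne : S.Nonempty := ⟨t, htmem, htle⟩
  have hbdd : BddBelow S := ⟨0, fun x hx => hx.1.1⟩
  set t₀ := sInf S with ht₀
  have ht₀0 : 0 ≤ t₀ := le_csInf hSne (fun x hx => hx.1.1)
  have ht₀T : t₀ < T := lt_of_le_of_lt (csInf_le hbdd ⟨htmem, htle⟩) htmem.2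
  have ht₀mem : t₀ ∈ Set.Ico (0 : ℝ) T := ⟨ht₀0, ht₀T⟩
  have hft₀ : f t₀ ≤ y₀ / 2 := by
    by_contra hgt
    push_neg at hgt
    have hcont : ContinuousAt f t₀ := (hderiv t₀ ht₀mem).continuousAt
    have hev : f ⁻¹' Set.Ioi (y₀ / 2) ∈ nhds t₀ := hcont (Ioi_mem_nhds hgt)
    rw [Metric.mem_nhds_iff] at hev
    obtain ⟨ε, hε, hball⟩ := hev
    obtain ⟨s, hsS, hslt⟩ := Real.lt_sInf_add_pos hSne hε
    have hst₀ : t₀ ≤ s := csInf_le hbdd hsS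
    have : s ∈ Metric.ball t₀ ε := by
      rw [Metric.mem_ball, Real.dist_eq, abs_lt]
      constructor <;> linarith
    have := hball this
    simp only [Set.mem_preimage, Set.mem_Ioi] at this
    linarith [hsS.2]
  have hmono : MonotoneOn f (Set.Icc 0 t₀) := by
    apply monotoneOn_of_deriv_nonneg (convex_Icc 0 t₀)
    · intro x hx
      exact (hderiv x ⟨hx.1, lt_of_le_of_lt hx.2 ht₀T⟩).continuousAt.continuousWithinAt
    · intro x hx
      rw [interior_Icc] at hx
      exact (hderiv x ⟨hx.1.le, hx.2.trans ht₀T⟩).differentiableAt.differentiableWithinAt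
    · intro x hx
      rw [interior_Icc] at hx
      have hxm : x ∈ Set.Ico (0 : ℝ) T := ⟨hx.1.le, hx.2.trans ht₀T⟩
      rw [(hderiv x hxm).deriv]
      have hfx : y₀ / 2 < f x := by
        by_contra hle
        push_neg at hle
        have : t₀ ≤ x := csInf_le hbdd ⟨hxm, hle⟩
        exact absurd hx.2 (not_lt.mpr this)
      have hfxpos : 0 < f x := lt_trans (by positivity) hfx
      calc (0 : ℝ) ≤ f x ^ 3 / n := by positivity
        _ ≤ f' x := hineq x hxm
  have hle := hmono (Set.left_mem_Icc.mpr ht₀0) (Set.right_mem_Icc.mpr ht₀0) ht₀0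
  rw [hf0] at hle
  linarith

theorem stmt_18 (n T y₀ : ℝ) (hn : 0 < n) (hT : 0 < T) (hy : 0 < y₀)
    (f f' : ℝ → ℝ) (hf0 : f 0 = y₀)
    (hderiv : ∀ t ∈ Set.Ico (0 : ℝ) T, HasDerivAt f (f' t) t)
    (hineq : ∀ t ∈ Set.Ico (0 : ℝ) T, f t ^ 3 / n ≤ f' t) :
    ∀ t ∈ Set.Ico (0 : ℝ) T,
      0 < 1 - (2 / n) * y₀ ^ 2 * t ∧
        y₀ / Real.sqrt (1 - (2 / n) * y₀ ^ 2 * t) ≤ f t := by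
  have hpos : ∀ t ∈ Set.Ico (0 : ℝ) T, 0 < f t := fun t ht =>
    lt_trans (by positivity) (stmt_18_pos n T y₀ hn hy f f' hf0 hderiv hineq t ht)
  intro t ht
  -- h s = -(f s ^ 2)⁻¹ - (2/n) * s is nondecreasing on [0, t]
  set h : ℝ → ℝ := fun s => -(f s ^ 2)⁻¹ - (2 / n) * s with hh
  have hsub : ∀ x ∈ Set.Icc (0 : ℝ) t, x ∈ Set.Ico (0 : ℝ) T :=
    fun x hx => ⟨hx.1, lt_of_le_of_lt hx.2 ht.2⟩
  have hder : ∀ x ∈ Set.Icc (0 : ℝ) t,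
      HasDerivAt h (-(-(2 * f x ^ 1 * f' x) / (f x ^ 2) ^ 2) - 2 / n) x := by
    intro x hx
    have hxm := hsub x hx
    have hfx := hpos x hxm
    have h1 : HasDerivAt (fun s => f s ^ 2) ((2 : ℕ) * f x ^ 1 * f' x) x :=
      (hderiv x hxm).pow 2
    have h2 : HasDerivAt (fun s => (f s ^ 2)⁻¹) (-((2 : ℕ) * f x ^ 1 * f' x) / (f x ^ 2) ^ 2) x :=
      h1.inv (by positivity)
    have h3 := h2.neg
    have h4 : HasDerivAt (fun s => (2 / n) * s) (2 / n) x := by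
      simpa using (hasDerivAt_id x).const_mul (2 / n)
    have := h3.sub h4
    simp only [Nat.cast_ofNat] at this ⊢
    exact this
  have hmono : MonotoneOn h (Set.Icc 0 t) := by
    apply monotoneOn_of_deriv_nonneg (convex_Icc 0 t)
    · intro x hx
      exact (hder x hx).continuousAt.continuousWithinAt
    · intro x hx
      rw [interior_Icc] at hx
      exact (hder x ⟨hx.1.le, hx.2.le⟩).differentiableAt.differentiableWithinAt
    · intro x hx
      rw [interior_Icc] at hx
      have hx' : x ∈ Set.Icc (0 : ℝ) t := ⟨hx.1.le, hx.2.le⟩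
      rw [(hder x hx').deriv]
      have hxm := hsub x hx'
      have hfx := hpos x hxm
      have hineqx := hineq x hxm
      have hkey : 2 / n ≤ 2 * f x ^ 1 * f' x / (f x ^ 2) ^ 2 := by
        rw [div_le_div_iff₀ hn (by positivity)]
        have : f x ^ 3 ≤ n * f' x := by
          have := (div_le_iff₀ hn).mp hineqx
          linarith
        nlinarith [pow_pos hfx 1, pow_pos hfx 3, mul_le_mul_of_nonneg_left this hfx.le]
      have hrw : -(-(2 * f x ^ 1 * f' x) / (f x ^ 2) ^ 2) = 2 * f x ^ 1 * f' x / (f x ^ 2) ^ 2 := by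
        ring
      linarith [hkey, hrw]
  have hIcc0 : (0 : ℝ) ∈ Set.Icc (0 : ℝ) t := Set.left_mem_Icc.mpr ht.1
  have hIcct : t ∈ Set.Icc (0 : ℝ) t := Set.right_mem_Icc.mpr ht.1
  have hle := hmono hIcc0 hIcct ht.1
  simp only [hh, hf0, mul_zero, sub_zero] at hle
  -- hle : -(y₀ ^ 2)⁻¹ ≤ -(f t ^ 2)⁻¹ - 2 / n * t
  have hft := hpos t ht
  have hid1 : f t ^ 2 * (f t ^ 2)⁻¹ = 1 := mul_inv_cancel₀ (by positivity)
  have hid2 : y₀ ^ 2 * (y₀ ^ 2)⁻¹ = 1 := mul_inv_cancel₀ (by positivity)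
  have hinvpos : 0 < (f t ^ 2)⁻¹ := by positivity
  have hD : 0 < 1 - (2 / n) * y₀ ^ 2 * t := by
    have h5 : (2 / n) * t < (y₀ ^ 2)⁻¹ := by linarith
    nlinarith [pow_pos hy 2]
  refine ⟨hD, ?_⟩
  have h6 : y₀ ^ 2 ≤ f t ^ 2 * (1 - (2 / n) * y₀ ^ 2 * t) := by
    have h5 : (f t ^ 2)⁻¹ + 2 / n * t ≤ (y₀ ^ 2)⁻¹ := by linarith
    nlinarith [hid1, hid2, mul_le_mul_of_nonneg_left h5
      (le_of_lt (mul_pos (pow_pos hft 2) (pow_pos hy 2))), pow_pos hft 2, pow_pos hy 2]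
  rw [div_le_iff₀ (Real.sqrt_pos.mpr hD)]
  calc y₀ = Real.sqrt (y₀ ^ 2) := (Real.sqrt_sq hy.le).symm
    _ ≤ Real.sqrt (f t ^ 2 * (1 - (2 / n) * y₀ ^ 2 * t)) := Real.sqrt_le_sqrt h6
    _ = f t * Real.sqrt (1 - (2 / n) * y₀ ^ 2 * t) := by
        rw [Real.sqrt_mul (by positivity), Real.sqrt_sq hft.le]
end
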